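/- Let m ≥ 1, let O = {l ∈ ℝᵐ : lᵢ > 0 for all i} be the open positive orthant, let K : O → ℝᵐ be continuous, and let H : O → ℝ be differentiable with ∂H/∂lᵢ(l) = −Kᵢ(l) for all l ∈ O and all i. Let l : [0,∞) → O be a differentiable curve with lᵢ'(t) = Kᵢ(l(t))·lᵢ(t) for all i and t ≥ 0, and suppose l(t) converges as t → ∞ to some l̄ ∈ O. Then K(l̄) = 0. -/

import Mathlib

/-!
Along the flow, `H` is a Lyapunov function: `d/dt H(l(t)) = -∑ᵢ Kᵢ(l(t))² lᵢ(t)`. This derivative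
converges to `-∑ᵢ Kᵢ(l̄)² l̄ᵢ`, while `H(l(t))` itself converges to `H(l̄)`; by the mean value
theorem on `[t, t + 1]` the limit of the derivative must then vanish, and since `l̄ > 0` this
forces `K(l̄) = 0`.
-/

open Real Set Filter Topology

theorem eq_zero_of_tendsto_of_hasDerivAt_of_tendsto {f f' : ℝ → ℝ} {c L : ℝ}
    (hf : ∀ᶠ t in atTop, HasDerivAt f (f' t) t) (hfc : Tendsto f atTop (𝓝 c))
    (hf' : Tendsto f' atTop (𝓝 L)) : L = 0 := by
  obtain ⟨T, hT⟩ := eventually_atTop.1 hf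
  have hmax : Tendsto (fun t => max t T) atTop atTop :=
    tendsto_atTop_mono (fun t => le_max_left t T) tendsto_id
  have hslope : ∀ t, ∃ ξ ∈ Ioo (max t T) (max t T + 1),
      f' ξ = f (max t T + 1) - f (max t T) := fun t => by
    have hderiv : ∀ x, max t T ≤ x → HasDerivAt f (f' x) x :=
      fun x hx => hT x ((le_max_right t T).trans hx)
    simpa using exists_hasDerivAt_eq_slope f f' (lt_add_one (max t T))
      (fun x hx => (hderiv x hx.1).continuousAt.continuousWithinAt)
      (fun x hx => hderiv x hx.1.le)
  choose ξ hξ hξf using hslope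
  have hξ_top : Tendsto ξ atTop atTop :=
    tendsto_atTop_mono (fun t => (le_max_left t T).trans (hξ t).1.le) tendsto_id
  have hincr : Tendsto (fun t => f (max t T + 1) - f (max t T)) atTop (𝓝 0) := by
    simpa using (hfc.comp (tendsto_atTop_add_const_right _ 1 hmax)).sub (hfc.comp hmax)
  exact tendsto_nhds_unique ((hf'.comp hξ_top).congr hξf) hincr

theorem HasFDerivAt.comp_hasDerivAt_of_sum_proj {ι : Type*} [Fintype ι]
    {H : (ι → ℝ) → ℝ} {g : ι → ℝ} {γ : ℝ → ι → ℝ} {v : ι → ℝ} {t : ℝ}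
    (hH : HasFDerivAt H (∑ i, g i • (ContinuousLinearMap.proj i : (ι → ℝ) →L[ℝ] ℝ)) (γ t))
    (hγ : HasDerivAt γ v t) : HasDerivAt (fun s => H (γ s)) (∑ i, g i * v i) t := by
  simpa [Function.comp_def] using hH.comp_hasDerivAt t hγ

theorem eq_zero_of_sum_sq_mul_eq_zero {ι : Type*} [Fintype ι] {a w : ι → ℝ}
    (hw : ∀ i, 0 < w i) (h : ∑ i, a i ^ 2 * w i = 0) : a = 0 := by
  rw [Finset.sum_eq_zero_iff_of_nonneg fun i _ => mul_nonneg (sq_nonneg _) (hw i).le] at h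
  funext i
  simpa [(hw i).ne'] using h i (Finset.mem_univ i)

theorem flow_limit_has_zero_curvature (m : ℕ)
    (K : (Fin m → ℝ) → Fin m → ℝ)
    (hK : ContinuousOn K {l : Fin m → ℝ | ∀ i, 0 < l i})
    (H : (Fin m → ℝ) → ℝ)
    -- `H` is differentiable on the positive orthant with `∂H/∂lᵢ = −Kᵢ`
    (hH : ∀ l : Fin m → ℝ, (∀ i, 0 < l i) →
      HasFDerivAt H
        (∑ i : Fin m, (-(K l i)) • (ContinuousLinearMap.proj i : (Fin m → ℝ) →L[ℝ] ℝ)) l)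
    (l : ℝ → Fin m → ℝ)
    (hpos : ∀ t, 0 ≤ t → ∀ i, 0 < l t i)
    (hflow : ∀ t, 0 ≤ t → ∀ i,
      HasDerivWithinAt (fun s => l s i) (K (l t) i * l t i) (Set.Ici (0 : ℝ)) t)
    (lbar : Fin m → ℝ) (hlbar : ∀ i, 0 < lbar i)
    (hconv : Tendsto l atTop (nhds lbar)) :
    K lbar = 0 := by
  have hlyap : ∀ᶠ t in atTop, HasDerivAt (fun s => H (l s))
      (∑ i, -K (l t) i * (K (l t) i * l t i)) t := by
    filter_upwards [eventually_gt_atTop 0] with t ht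
    have hl : HasDerivAt l (fun i => K (l t) i * l t i) t :=
      hasDerivAt_pi.2 fun i => (hflow t ht.le i).hasDerivAt (Ici_mem_nhds ht)
    exact (hH (l t) (hpos t ht.le)).comp_hasDerivAt_of_sum_proj hl
  have hKl : Tendsto (fun t => K (l t)) atTop (𝓝 (K lbar)) :=
    (hK lbar hlbar).tendsto.comp <| tendsto_nhdsWithin_of_tendsto_nhds_of_eventually_within _
      hconv ((eventually_ge_atTop 0).mono fun t ht => hpos t ht)
  have hlyap_lim : Tendsto (fun t => ∑ i, -K (l t) i * (K (l t) i * l t i)) atTop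
      (𝓝 (∑ i, -K lbar i * (K lbar i * lbar i))) :=
    tendsto_finsetSum _ fun i _ =>
      (hKl.apply_nhds i).neg.mul ((hKl.apply_nhds i).mul (hconv.apply_nhds i))
  have hzero := eq_zero_of_tendsto_of_hasDerivAt_of_tendsto hlyap
    ((hH lbar hlbar).continuousAt.tendsto.comp hconv) hlyap_lim
  refine eq_zero_of_sum_sq_mul_eq_zero hlbar (neg_eq_zero.mp ?_)
  rw [← hzero, ← Finset.sum_neg_distrib]
  exact Finset.sum_congr rfl fun i _ => by ring
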